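/- arXiv:1405.6122 — 2 statements merged into one kernel-verified Lean document; each statement's English description precedes it below -/
import Mathlib

section
/- For Morse potentials J1(z)=k1(1-e^{-k2(z-δ1)})^2-k1, J2(z)=J1(2z), with γ the minimizer of J_CB=J1+J2, writing q = e^{k2 γ} > 1, the critical point equation J_CB'(γ)=0 yields e^{k2 δ1} = (q^3 + 2q^2)/(2 + q^2), and consequently J2(γ) - 2 J2((δ1+γ)/2) = k1/(q^2 (q^2+2)^2) · (2q^5 - 5q^4 + 16q^3 - 12q^2 + 16q - 8) > 0. -/
/-!
Substituting `x = exp (-k2 * (z - δ1))` turns `J1` into `k1 * ((1 - x) ^ 2 - 1)` and `J1'` into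
`2 k1 k2 (1 - x) x`. With `E = exp (k2 * δ1)` and `q = exp (k2 * γ)`, the points `γ`, `2γ` and
`δ1 + γ` correspond to `x = E / q`, `E / q ^ 2` and `1 / q`, so the critical point equation is
linear in `E` once the factor `E` is cancelled, and the energy gap becomes a rational function of
`q` alone, whose numerator is positive for `q > 1`.
-/

open Real

lemma hasDerivAt_morse (k1 k2 δ1 z : ℝ) :
    HasDerivAt (fun z => k1 * (1 - exp (-k2 * (z - δ1))) ^ 2 - k1)
      (2 * k1 * k2 * (1 - exp (-k2 * (z - δ1))) * exp (-k2 * (z - δ1))) z := by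
  refine ((((((hasDerivAt_id z).sub_const δ1).const_mul (-k2)).exp.const_sub 1).pow 2).const_mul
    k1 |>.sub_const k1).congr_deriv ?_
  simp only [id, Nat.cast_ofNat]
  ring

lemma exp_neg_mul_sub (k2 δ1 z : ℝ) :
    exp (-k2 * (z - δ1)) = exp (k2 * δ1) / exp (k2 * z) := by
  rw [← exp_sub]
  ring_nf

lemma eq_of_morse_crit {E q : ℝ} (hE : E ≠ 0) (hq : q ≠ 0)
    (h : (1 - E / q) * (E / q) + 2 * ((1 - E / q ^ 2) * (E / q ^ 2)) = 0) :
    E = (q ^ 3 + 2 * q ^ 2) / (2 + q ^ 2) := by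
  have hlin : E / q ^ 4 * ((q - E) * q ^ 2 + 2 * (q ^ 2 - E)) = 0 := by
    rw [← h]
    field_simp
  have hcrit_lin := (mul_eq_zero.mp hlin).resolve_left (by positivity)
  rw [eq_div_iff (by positivity)]
  linear_combination -hcrit_lin

lemma morse_gap_eq (k1 : ℝ) {q : ℝ} (hq : q ≠ 0) :
    k1 * (1 - (q + 2) / (q ^ 2 + 2)) ^ 2 - k1 - 2 * (k1 * (1 - 1 / q) ^ 2 - k1) =
      k1 / (q ^ 2 * (q ^ 2 + 2) ^ 2) *
        (2 * q ^ 5 - 5 * q ^ 4 + 16 * q ^ 3 - 12 * q ^ 2 + 16 * q - 8) := by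
  field_simp
  ring

lemma morse_gap_numerator_pos {q : ℝ} (hq : 1 < q) :
    0 < 2 * q ^ 5 - 5 * q ^ 4 + 16 * q ^ 3 - 12 * q ^ 2 + 16 * q - 8 := by
  have hq0 : 0 < q := one_pos.trans hq
  nlinarith [sq_nonneg (q - 1), pow_pos hq0 3, mul_pos hq0 hq0]

theorem stmt_8_general (k1 k2 δ1 : ℝ) (hk1 : 0 < k1) (hk2 : 0 < k2)
    (J1 J2 : ℝ → ℝ)
    (hJ1 : ∀ z, J1 z = k1 * (1 - Real.exp (-k2 * (z - δ1))) ^ 2 - k1)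
    (hJ2 : ∀ z, J2 z = J1 (2 * z))
    (γ : ℝ)
    (hcrit : deriv J1 γ + 2 * deriv J1 (2 * γ) = 0)
    (q : ℝ) (hqdef : q = Real.exp (k2 * γ)) (hq : 1 < q) :
    Real.exp (k2 * δ1) = (q ^ 3 + 2 * q ^ 2) / (2 + q ^ 2) ∧
    J2 γ - 2 * J2 ((δ1 + γ) / 2) =
      k1 / (q ^ 2 * (q ^ 2 + 2) ^ 2) *
        (2 * q ^ 5 - 5 * q ^ 4 + 16 * q ^ 3 - 12 * q ^ 2 + 16 * q - 8) ∧
    0 < J2 γ - 2 * J2 ((δ1 + γ) / 2) := by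
  have hq0 : 0 < q := one_pos.trans hq
  set E := exp (k2 * δ1)
  have hq2 : exp (k2 * (2 * γ)) = q ^ 2 := by
    rw [show k2 * (2 * γ) = k2 * γ + k2 * γ by ring, exp_add, hqdef, sq]
  have hderiv (z : ℝ) :
      deriv J1 z = 2 * k1 * k2 * (1 - E / exp (k2 * z)) * (E / exp (k2 * z)) := by
    rw [funext hJ1, (hasDerivAt_morse k1 k2 δ1 z).deriv, exp_neg_mul_sub]
  have hcrit' : (1 - E / q) * (E / q) + 2 * ((1 - E / q ^ 2) * (E / q ^ 2)) = 0 := by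
    rw [hderiv, hderiv, hq2, ← hqdef] at hcrit
    refine (mul_eq_zero.mp ?_).resolve_left (by positivity : 2 * k1 * k2 ≠ 0)
    linear_combination hcrit
  have hE : E = (q ^ 3 + 2 * q ^ 2) / (2 + q ^ 2) := eq_of_morse_crit (exp_pos _).ne' hq0.ne' hcrit'
  have hgap : J2 γ - 2 * J2 ((δ1 + γ) / 2) =
      k1 * (1 - (q + 2) / (q ^ 2 + 2)) ^ 2 - k1 - 2 * (k1 * (1 - 1 / q) ^ 2 - k1) := by
    have hx : E / exp (k2 * (2 * γ)) = (q + 2) / (q ^ 2 + 2) := by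
      rw [hq2, hE]
      field_simp
      ring
    have hy : E / exp (k2 * (2 * ((δ1 + γ) / 2))) = 1 / q := by
      show exp (k2 * δ1) / _ = _
      rw [show k2 * (2 * ((δ1 + γ) / 2)) = k2 * δ1 + k2 * γ by ring, exp_add, ← hqdef]
      field_simp
    rw [hJ2, hJ2, hJ1, hJ1, exp_neg_mul_sub, exp_neg_mul_sub, hx, hy]
  rw [hgap, morse_gap_eq k1 hq0.ne']
  exact ⟨hE, rfl, mul_pos (by positivity) (morse_gap_numerator_pos hq)⟩

theorem stmt_8 (k1 k2 δ1 : ℝ) (hk1 : 0 < k1) (hk2 : 0 < k2) (hδ1 : 0 < δ1)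
    (J1 J2 : ℝ → ℝ)
    (hJ1 : ∀ z, J1 z = k1 * (1 - Real.exp (-k2 * (z - δ1))) ^ 2 - k1)
    (hJ2 : ∀ z, J2 z = J1 (2 * z))
    (γ : ℝ) (hγ : 0 < γ)
    (hcrit : deriv J1 γ + 2 * deriv J1 (2 * γ) = 0)
    (q : ℝ) (hqdef : q = Real.exp (k2 * γ)) (hq : 1 < q) :
    Real.exp (k2 * δ1) = (q ^ 3 + 2 * q ^ 2) / (2 + q ^ 2) ∧
    J2 γ - 2 * J2 ((δ1 + γ) / 2) =
      k1 / (q ^ 2 * (q ^ 2 + 2) ^ 2) *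
        (2 * q ^ 5 - 5 * q ^ 4 + 16 * q ^ 3 - 12 * q ^ 2 + 16 * q - 8) ∧
    0 < J2 γ - 2 * J2 ((δ1 + γ) / 2) :=
  stmt_8_general k1 k2 δ1 hk1 hk2 J1 J2 hJ1 hJ2 γ hcrit q hqdef hq
end

section
/- Let J1, J2 satisfy [LJ1]–[LJ4], and for m ∈ ℕ define the interface jump energy B_IF(m) = inf over k ∈ ℕ and v: ℕ → ℝ with v^0 = 0 of [ (1/2)J1(v^1-v^0) + Σ_{i=0}^{k-1}{ J2((v^{i+2}-v^i)/2) + (1/2)J1(v^{i+2}-v^{i+1}) + (1/2)J1(v^{i+1}-v^i) - J0(γ) } + ((2m+1)/2)( J_CB(v^{k+1}-v^k) - J0(γ) ) ]. Then (1/2)J1(δ1) ≤ B_IF(m) ≤ (1/2)J1(γ) for every m ∈ ℕ. -/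
/-!
Every summand of the energy is a cell energy `J2((a+b)/2) + (J1 a + J1 b)/2 - J0(γ)`, which is
nonnegative because it dominates `J0((a+b)/2) - J0(γ)`; likewise `J_CB(z) ≥ J0(z) ≥ J0(γ)` (take
`z1 = z2 = z`), so the energy is at least `J1(v¹ - v⁰)/2 ≥ J1(δ1)/2`. The competitor `k = 0`,
`vⁱ = iγ` has energy `J1(γ)/2 + (2m+1)/2 · (J_CB(γ) - J0(γ)) = J1(γ)/2`.
-/

open Set

lemma apply_le_of_forall_ne_lt {α β : Type*} [Preorder β] {f : α → β} {a : α}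
    (h : ∀ z, z ≠ a → f a < f z) (z : α) : f a ≤ f z := by
  rcases eq_or_ne z a with rfl | hz
  · exact le_rfl
  · exact (h z hz).le

/-- In the paper's notation, `J0 = J2 + midInfConv J1 / 2`. -/
noncomputable def midInfConv (f : ℝ → ℝ) (z : ℝ) : ℝ :=
  sInf {y : ℝ | ∃ z1 z2 : ℝ, z1 + z2 = 2 * z ∧ y = f z1 + f z2}

lemma midInfConv_le {f : ℝ → ℝ} (hf : BddBelow (range f)) {a b : ℝ} :
    midInfConv f ((a + b) / 2) ≤ f a + f b := by
  obtain ⟨c, hc⟩ := hf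
  refine csInf_le ⟨c + c, ?_⟩ ⟨a, b, by ring, rfl⟩
  rintro _ ⟨z1, z2, -, rfl⟩
  exact add_le_add (hc (mem_range_self z1)) (hc (mem_range_self z2))

/-- `B_IF(m)` is the infimum of `interfaceEnergy J1 J2 J_CB (J0 γ) m k v` over `k` and `v` with `v 0 = 0`. -/
noncomputable def interfaceEnergy (J1 J2 JCB : ℝ → ℝ) (e : ℝ) (m k : ℕ) (v : ℕ → ℝ) : ℝ :=
  (1/2) * J1 (v 1 - v 0) +
    (∑ i ∈ Finset.range k, (J2 ((v (i+2) - v i) / 2) +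
      (1/2) * J1 (v (i+2) - v (i+1)) + (1/2) * J1 (v (i+1) - v i) - e)) +
    ((2 * (m:ℝ) + 1) / 2) * (JCB (v (k+1) - v k) - e)

section interfaceEnergy

variable {J1 J2 JCB : ℝ → ℝ} {e : ℝ}

lemma half_le_interfaceEnergy {c : ℝ} (hJ1 : ∀ z, c ≤ J1 z)
    (hcell : ∀ a b, e ≤ J2 ((a + b) / 2) + (1/2) * J1 a + (1/2) * J1 b)
    (hCB : ∀ z, e ≤ JCB z) (m k : ℕ) (v : ℕ → ℝ) :
    (1/2) * c ≤ interfaceEnergy J1 J2 JCB e m k v := by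
  have hsum : 0 ≤ ∑ i ∈ Finset.range k, (J2 ((v (i+2) - v i) / 2) +
      (1/2) * J1 (v (i+2) - v (i+1)) + (1/2) * J1 (v (i+1) - v i) - e) := by
    refine Finset.sum_nonneg fun i _ => ?_
    have h := hcell (v (i+2) - v (i+1)) (v (i+1) - v i)
    rw [sub_add_sub_cancel] at h
    linarith
  have hlast : 0 ≤ ((2 * (m:ℝ) + 1) / 2) * (JCB (v (k+1) - v k) - e) :=
    mul_nonneg (by positivity) (sub_nonneg.2 (hCB _))
  have hfirst := hJ1 (v 1 - v 0)
  unfold interfaceEnergy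
  linarith

lemma interfaceEnergy_zero_natCast_mul (m : ℕ) (γ : ℝ) :
    interfaceEnergy J1 J2 JCB e m 0 (fun i => (i : ℝ) * γ) =
      (1/2) * J1 γ + ((2 * (m:ℝ) + 1) / 2) * (JCB γ - e) := by
  simp [interfaceEnergy]

end interfaceEnergy

theorem stmt_16 (J1 J2 J0 JCB : ℝ → ℝ) (γ δ1 : ℝ)
    (hJ0 : ∀ z, J0 z = J2 z +
        (1/2) * sInf {y : ℝ | ∃ z1 z2 : ℝ, z1 + z2 = 2 * z ∧ y = J1 z1 + J1 z2})
    (hJCB : ∀ z, JCB z = J1 z + J2 z)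
    (hγ : ∀ z, z ≠ γ → J0 γ < J0 z)
    (hJ0γ : J0 γ = JCB γ)
    (hδ1 : ∀ z, z ≠ δ1 → J1 δ1 < J1 z)
    (BIF : ℕ → ℝ)
    (hBIF : ∀ m : ℕ, BIF m = sInf {E : ℝ | ∃ (k : ℕ) (v : ℕ → ℝ), v 0 = 0 ∧
        E = (1/2) * J1 (v 1 - v 0) +
          (∑ i ∈ Finset.range k, (J2 ((v (i+2) - v i) / 2) +
            (1/2) * J1 (v (i+2) - v (i+1)) + (1/2) * J1 (v (i+1) - v i) - J0 γ)) +
          ((2 * (m:ℝ) + 1) / 2) * (JCB (v (k+1) - v k) - J0 γ)}) :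
    ∀ m : ℕ, (1/2) * J1 δ1 ≤ BIF m ∧ BIF m ≤ (1/2) * J1 γ := by
  intro m
  have hJ1 : ∀ z, J1 δ1 ≤ J1 z := apply_le_of_forall_ne_lt hδ1
  have hJ0_le (a b : ℝ) : J0 ((a + b) / 2) ≤ J2 ((a + b) / 2) + (1/2) * (J1 a + J1 b) := by
    have h := midInfConv_le (f := J1) ⟨J1 δ1, forall_mem_range.2 hJ1⟩ (a := a) (b := b)
    rw [hJ0]
    unfold midInfConv at h
    linarith
  have hcell (a b : ℝ) : J0 γ ≤ J2 ((a + b) / 2) + (1/2) * J1 a + (1/2) * J1 b := by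
    linarith [hJ0_le a b, apply_le_of_forall_ne_lt hγ ((a + b) / 2)]
  have hCB (z : ℝ) : J0 γ ≤ JCB z := by
    have h := hcell z z
    rw [add_self_div_two] at h
    rw [hJCB]
    linarith
  have hlow : ∀ E ∈ {E : ℝ | ∃ (k : ℕ) (v : ℕ → ℝ), v 0 = 0 ∧
      E = interfaceEnergy J1 J2 JCB (J0 γ) m k v}, (1/2) * J1 δ1 ≤ E := by
    rintro _ ⟨k, v, -, rfl⟩
    exact half_le_interfaceEnergy hJ1 hcell hCB m k v
  have htest : (1/2) * J1 γ ∈ {E : ℝ | ∃ (k : ℕ) (v : ℕ → ℝ), v 0 = 0 ∧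
      E = interfaceEnergy J1 J2 JCB (J0 γ) m k v} :=
    ⟨0, fun i => (i : ℝ) * γ, by simp, by rw [interfaceEnergy_zero_natCast_mul, hJ0γ]; ring⟩
  rw [hBIF m]
  exact ⟨le_csInf ⟨_, htest⟩ hlow, csInf_le ⟨_, hlow⟩ htest⟩
end
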